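/- Let q be a prime power, m, r, g, δ positive integers, and set ν = r + δ − 1. Let C_out ⊆ F_{q^m}^{gr} be an F_{q^m}-linear MSRD code for the length partition (g, r) over F_q, of dimension k with 1 ≤ k ≤ gr − 1. For each i = 1, …, g, let A_i ∈ F_q^{r×ν} be a generator matrix of an F_q-linear MDS code of length ν and dimension r. Define C_glob = C_out · diag(A_1, A_2, …, A_g) ⊆ F_{q^m}^{gν}, where diag denotes the block-diagonal matrix. Then C_glob is an F_{q^m}-linear code of dimension k, and C_glob is a PMDS code with (r, δ)-localities: for the local sets Γ_i = {(i−1)ν + 1, …, iν}, the projection of C_glob onto the coordinates in Γ_i has minimum Hamming distance at least δ for every i, and for every choice of subsets Δ_i ⊆ Γ_i with |Δ_i| = r for all i, the restriction of C_glob to the coordinates in Δ = Δ_1 ∪ ⋯ ∪ Δ_g is an MDS code in F_{q^m}^{gr}. -/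

import Mathlib

/-!
Each local matrix `A i` generates an MDS code over `F_q`, so any `r` of its columns are
linearly independent; this survives extension of scalars, hence every nonzero
`F_{q^m}`-combination of the rows of `A i` has weight at least `ν - r + 1 = δ`. Restricting
`C_glob` to `Δ` amounts to multiplying `C_out` by a block-diagonal matrix of invertible
`F_q`-matrices. Such a matrix preserves the `F_q`-rank of every block, and the `F_q`-rank of a
block is at most its Hamming weight, so the restricted code has minimum distance at least
`d_SR(C_out)` and as many words as `C_out`; the Singleton bound then forces equality.
-/

/-- The sum-rank weight of a vector partitioned into blocks of length `r`, over the base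
field `Fq`: the sum over blocks of the `Fq`-dimension of the span of the block entries. -/
noncomputable def wtSR (Fq : Type) {L : Type} [Field Fq] [Field L] [Algebra Fq L]
    {ι : Type} [Fintype ι] {r : ℕ} (c : ι × Fin r → L) : ℕ :=
  ∑ i : ι, Module.finrank Fq
    ↥(Submodule.span Fq (Set.range fun j : Fin r => c (i, j)))

/-- The minimum sum-rank distance of a code (a set of vectors), over the base field
`Fq`, for blocks of length `r`. -/
noncomputable def dSR (Fq : Type) {L : Type} [Field Fq] [Field L] [Algebra Fq L]
    {ι : Type} [Fintype ι] {r : ℕ} (C : Set (ι × Fin r → L)) : ℕ :=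
  sInf {w | ∃ c ∈ C, ∃ d ∈ C, c ≠ d ∧ wtSR Fq (c - d) = w}

/-- The Hamming distance between two vectors: the number of coordinates where they
differ. -/
noncomputable def hdist {F ι : Type} (c d : ι → F) : ℕ :=
  Nat.card {i // c i ≠ d i}

/-- The minimum Hamming distance of a code (a set of vectors). -/
noncomputable def minHD {F ι : Type} (S : Set (ι → F)) : ℕ :=
  sInf {w | ∃ c ∈ S, ∃ d ∈ S, c ≠ d ∧ hdist c d = w}

/-- The block-diagonal matrix over `K` built from `r × ν` matrices over the subfield
`Fq`, one for each block index in `ι`. -/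
def BlockDiag (Fq K : Type) [Field Fq] [Field K] [Algebra Fq K]
    {ι : Type} [DecidableEq ι] {r ν : ℕ}
    (A : ι → Matrix (Fin r) (Fin ν) Fq) : Matrix (ι × Fin r) (ι × Fin ν) K :=
  fun x y => if x.1 = y.1 then algebraMap Fq K (A x.1 x.2 y.2) else 0

open Matrix Function Submodule Module

section Hamming

variable {F ι : Type}

theorem hdist_eq_hammingDist [Fintype ι] [DecidableEq F] (c d : ι → F) :
    hdist c d = hammingDist c d := by
  rw [hdist, hammingDist, Nat.card_eq_fintype_card, Fintype.card_subtype]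

theorem minHD_le_hdist {S : Set (ι → F)} {c d : ι → F} (hc : c ∈ S) (hd : d ∈ S)
    (hcd : c ≠ d) : minHD S ≤ hdist c d :=
  Nat.sInf_le ⟨c, hc, d, hd, hcd, rfl⟩

theorem le_minHD {S : Set (ι → F)} {w : ℕ} (hS : ∃ c ∈ S, ∃ d ∈ S, c ≠ d)
    (h : ∀ c ∈ S, ∀ d ∈ S, c ≠ d → w ≤ hdist c d) : w ≤ minHD S := by
  obtain ⟨c, hc, d, hd, hcd⟩ := hS
  refine le_csInf ⟨_, c, hc, d, hd, hcd, rfl⟩ ?_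
  rintro _ ⟨c, hc, d, hd, hcd, rfl⟩
  exact h c hc d hd hcd

theorem minHD_le_card [Fintype ι] (S : Set (ι → F)) : minHD S ≤ Fintype.card ι := by
  classical
  by_cases hS : ∃ c ∈ S, ∃ d ∈ S, c ≠ d
  · obtain ⟨c, hc, d, hd, hcd⟩ := hS
    exact (minHD_le_hdist hc hd hcd).trans
      ((hdist_eq_hammingDist c d).trans_le hammingDist_le_card_fintype)
  · have hempty : {w | ∃ c ∈ S, ∃ d ∈ S, c ≠ d ∧ hdist c d = w} = ∅ :=
      Set.eq_empty_iff_forall_notMem.2 fun _ ⟨c, hc, d, hd, hcd, _⟩ => hS ⟨c, hc, d, hd, hcd⟩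
    rw [minHD, hempty, Nat.sInf_empty]
    exact Nat.zero_le _

/-- The Singleton bound. -/
theorem card_le_pow_minHD [Fintype ι] [Fintype F] {S : Set (ι → F)}
    (hS : ∃ c ∈ S, ∃ d ∈ S, c ≠ d) :
    Nat.card S ≤ Fintype.card F ^ (Fintype.card ι - minHD S + 1) := by
  classical
  have hpos : 1 ≤ minHD S := le_minHD hS fun c _ d _ hcd => by
    rw [hdist_eq_hammingDist]
    exact hammingDist_pos.2 hcd
  obtain ⟨T, -, hT⟩ := Finset.exists_subset_card_eq (s := (Finset.univ : Finset ι))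
    (n := Fintype.card ι - minHD S + 1) (by have := minHD_le_card S; rw [Finset.card_univ]; omega)
  have hinj : Injective fun (x : S) (t : T) => (x : ι → F) t := by
    rintro ⟨x, hx⟩ ⟨y, hy⟩ hxy
    by_contra hne
    have hsub : (Finset.univ.filter fun i => x i ≠ y i) ⊆ Finset.univ \ T := by
      intro i hi
      rw [Finset.mem_filter] at hi
      exact Finset.mem_sdiff.2 ⟨Finset.mem_univ i, fun hiT => hi.2 (congrFun hxy ⟨i, hiT⟩)⟩
    have hfar := minHD_le_hdist hx hy fun h => hne (Subtype.ext h)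
    have hnear := Finset.card_le_card hsub
    rw [Finset.card_sdiff_of_subset T.subset_univ, Finset.card_univ, hT] at hnear
    rw [hdist_eq_hammingDist] at hfar
    change hammingDist x y ≤ _ at hnear
    omega
  calc Nat.card S ≤ Nat.card (T → F) := Nat.card_le_card_of_injective _ hinj
    _ = _ := by simp [hT]

end Hamming

theorem hammingNorm_eq_sum_curry {ι κ β : Type*} [Fintype ι] [Fintype κ] [Zero β]
    [DecidableEq β] (x : ι × κ → β) : hammingNorm x = ∑ i, hammingNorm (curry x i) := by
  simp only [hammingNorm, Finset.card_filter]
  exact Fintype.sum_prod_type _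

section ColumnSubmatrices

variable {R : Type*} [Field R] [DecidableEq R] {r ν : ℕ}

theorem exists_injective_comp_eq_zero_iff (y : Fin ν → R) :
    (∃ f : Fin r → Fin ν, Injective f ∧ y ∘ f = 0) ↔ r + hammingNorm y ≤ ν := by
  have hsplit : Fintype.card {j // y j = 0} + hammingNorm y = ν := by
    rw [hammingNorm, Fintype.card_subtype, Finset.card_filter_add_card_filter_not,
      Finset.card_univ, Fintype.card_fin]
  constructor
  · rintro ⟨f, hf, hyf⟩
    have := Fintype.card_le_of_injective (fun t => (⟨f t, congrFun hyf t⟩ : {j // y j = 0}))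
      fun s t hst => hf (congrArg Subtype.val hst)
    rw [Fintype.card_fin] at this
    omega
  · intro h
    obtain ⟨e⟩ := Function.Embedding.nonempty_of_card_le
      (α := Fin r) (β := {j // y j = 0}) (by rw [Fintype.card_fin]; omega)
    exact ⟨fun t => e t, fun s t hst => e.injective (Subtype.ext hst), funext fun t => (e t).2⟩

/-- A nonzero `x` for which `x ᵥ* B` vanishes on `r` coordinates `f` is exactly a nonzero
vector in the left kernel of the column submatrix `B.submatrix id f`. -/
theorem forall_isUnit_submatrix_iff (B : Matrix (Fin r) (Fin ν) R) :
    (∀ f : Fin r → Fin ν, Injective f → IsUnit (B.submatrix id f)) ↔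
      ∀ x : Fin r → R, x ≠ 0 → ν < r + hammingNorm (x ᵥ* B) := by
  constructor
  · intro h x hx
    by_contra! hle
    obtain ⟨f, hf, hxf⟩ := (exists_injective_comp_eq_zero_iff (x ᵥ* B)).2 hle
    refine hx (vecMul_injective_iff_isUnit.2 (h f hf) ?_)
    change (x ᵥ* B) ∘ f = 0 ᵥ* B.submatrix id f
    rw [hxf, zero_vecMul]
  · intro h f hf
    rw [← vecMul_injective_iff_isUnit]
    intro x y hxy
    by_contra hne
    have hzero : ((x - y) ᵥ* B) ∘ f = 0 := by
      change (x - y) ᵥ* B.submatrix id f = 0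
      rw [sub_vecMul, sub_eq_zero]
      exact hxy
    have := (exists_injective_comp_eq_zero_iff ((x - y) ᵥ* B)).1 ⟨f, hf, hzero⟩
    have := h (x - y) (sub_ne_zero.2 hne)
    omega

theorem lt_add_hammingNorm_vecMul_map {L : Type*} [Field L] [DecidableEq L] [Algebra R L]
    (B : Matrix (Fin r) (Fin ν) R) (hB : ∀ x : Fin r → R, x ≠ 0 → ν < r + hammingNorm (x ᵥ* B))
    {w : Fin r → L} (hw : w ≠ 0) : ν < r + hammingNorm (w ᵥ* B.map (algebraMap R L)) := by
  refine (forall_isUnit_submatrix_iff _).1 (fun f hf => ?_) w hw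
  rw [submatrix_map]
  exact ((forall_isUnit_submatrix_iff B).2 hB f hf).map (algebraMap R L).mapMatrix

end ColumnSubmatrices

theorem lt_add_hammingNorm_vecMul_of_isMDS {F : Type} [Field F] [Fintype F] [DecidableEq F]
    {r ν : ℕ} (B : Matrix (Fin r) (Fin ν) F)
    (hdim : finrank F (LinearMap.range (vecMulLinear B)) = r)
    (hMDS : Nat.card (LinearMap.range (vecMulLinear B)) = Fintype.card F ^
      (ν - minHD ((LinearMap.range (vecMulLinear B) : Submodule F (Fin ν → F)) :
        Set (Fin ν → F)) + 1))
    {x : Fin r → F} (hx : x ≠ 0) : ν < r + hammingNorm (x ᵥ* B) := by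
  set S := LinearMap.range (vecMulLinear B)
  have hinj : Injective (vecMulLinear B) := by
    have := LinearMap.finrank_range_add_finrank_ker (vecMulLinear B)
    rw [hdim, finrank_fin_fun] at this
    exact LinearMap.ker_eq_bot.1 (Submodule.finrank_eq_zero.1 (by omega))
  have hr : r = ν - minHD (S : Set (Fin ν → F)) + 1 := by
    refine Nat.pow_right_injective (Fintype.one_lt_card (α := F))
      (?_ : Fintype.card F ^ r = _)
    dsimp only
    rw [← hMDS, Nat.card_eq_fintype_card, card_eq_pow_finrank (K := F) (V := S), hdim]
  have hmin_le : minHD (S : Set (Fin ν → F)) ≤ hammingNorm (x ᵥ* B) := by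
    have := minHD_le_hdist (LinearMap.mem_range_self (vecMulLinear B) x) S.zero_mem
      ((map_ne_zero_iff _ hinj).2 hx)
    rwa [hdist_eq_hammingDist, hammingDist_zero_right] at this
  have := minHD_le_card (S : Set (Fin ν → F))
  rw [Fintype.card_fin] at this
  omega

section SumRank

variable {F L : Type} [Field F] [Field L] [Algebra F L]

theorem span_range_vecMul_map_le {m n : Type*} [Fintype m] (w : m → L) (M : Matrix m n F) :
    span F (Set.range (w ᵥ* M.map (algebraMap F L))) ≤ span F (Set.range w) := by
  rw [span_le]
  rintro _ ⟨j, rfl⟩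
  refine sum_mem fun i _ => ?_
  change w i * algebraMap F L (M i j) ∈ _
  rw [mul_comm, ← Algebra.smul_def]
  exact smul_mem _ _ (subset_span ⟨i, rfl⟩)

theorem span_range_vecMul_map_eq {n : Type*} [Fintype n] [DecidableEq n] (w : n → L)
    {M : Matrix n n F} (hM : IsUnit M) :
    span F (Set.range (w ᵥ* M.map (algebraMap F L))) = span F (Set.range w) := by
  refine le_antisymm (span_range_vecMul_map_le w M) ?_
  have := span_range_vecMul_map_le (w ᵥ* M.map (algebraMap F L)) M⁻¹
  rwa [vecMul_vecMul, ← Matrix.map_mul, mul_nonsing_inv _ ((isUnit_iff_isUnit_det M).1 hM),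
    Matrix.map_one _ (map_zero _) (map_one _), vecMul_one] at this

theorem finrank_span_range_le_hammingNorm {n : Type*} [Fintype n] [DecidableEq L]
    (y : n → L) : finrank F (span F (Set.range y)) ≤ hammingNorm y := by
  have hsupp : span F (Set.range y) = span F ((Finset.univ.filter fun j => y j ≠ 0).image y) := by
    refine le_antisymm (span_le.2 ?_) (span_mono ?_)
    · rintro _ ⟨j, rfl⟩
      by_cases hj : y j = 0
      · rw [hj]
        exact zero_mem _
      · exact subset_span (Finset.mem_image_of_mem y (by simpa using hj))
    · intro x hx
      simp only [Finset.coe_image, Finset.coe_filter] at hx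
      obtain ⟨j, -, rfl⟩ := hx
      exact ⟨j, rfl⟩
  rw [hsupp]
  exact (finrank_span_finset_le_card _).trans Finset.card_image_le

theorem wtSR_pos {ι : Type} [Fintype ι] {r : ℕ} {x : ι × Fin r → L} (hx : x ≠ 0) :
    0 < wtSR F x := by
  obtain ⟨⟨i, j⟩, hij⟩ := Function.ne_iff.1 hx
  refine Finset.sum_pos' (fun _ _ => Nat.zero_le _) ⟨i, Finset.mem_univ i, ?_⟩
  have := Module.Finite.span_of_finite F (Set.finite_range fun j => x (i, j))
  refine Nat.pos_of_ne_zero fun h => hij ?_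
  exact (span_eq_bot.1 (Submodule.finrank_eq_zero.1 h)) _ ⟨j, rfl⟩

end SumRank

section BlockDiag

variable {Fq K : Type} [Field Fq] [Field K] [Algebra Fq K] {ι : Type} [Fintype ι]
  [DecidableEq ι] {r ν : ℕ}

theorem curry_vecMul_blockDiag (A : ι → Matrix (Fin r) (Fin ν) Fq) (x : ι × Fin r → K)
    (i : ι) : curry (x ᵥ* BlockDiag Fq K A) i = curry x i ᵥ* (A i).map (algebraMap Fq K) := by
  ext j
  simp [vecMul, dotProduct, BlockDiag, Fintype.sum_prod_type]

theorem vecMul_blockDiag_injective {A : ι → Matrix (Fin r) (Fin ν) Fq}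
    (hA : ∀ i, Injective fun w : Fin r → K => w ᵥ* (A i).map (algebraMap Fq K)) :
    Injective fun x : ι × Fin r → K => x ᵥ* BlockDiag Fq K A := by
  intro x y hxy
  ext ⟨i, t⟩
  refine congrFun (hA i (?_ : curry x i ᵥ* _ = curry y i ᵥ* _)) t
  simp only [← curry_vecMul_blockDiag]
  exact congrArg (curry · i) hxy

theorem funLeft_comp_vecMulLinear_blockDiag (A : ι → Matrix (Fin r) (Fin ν) Fq)
    (Δ : ι → Fin r → Fin ν) :
    LinearMap.funLeft K K (fun p : ι × Fin r => (p.1, Δ p.1 p.2)) ∘ₗ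
        vecMulLinear (BlockDiag Fq K A) =
      vecMulLinear (BlockDiag Fq K fun i => (A i).submatrix id (Δ i)) := by
  refine LinearMap.ext fun x => funext fun ⟨i, t⟩ => ?_
  exact (congrFun (curry_vecMul_blockDiag A x i) (Δ i t)).trans
    (congrFun (curry_vecMul_blockDiag (fun i => (A i).submatrix id (Δ i)) x i) t).symm

theorem wtSR_le_hammingNorm_vecMul_blockDiag [DecidableEq K]
    {M : ι → Matrix (Fin r) (Fin r) Fq} (hM : ∀ i, IsUnit (M i)) (x : ι × Fin r → K) :
    wtSR Fq x ≤ hammingNorm (x ᵥ* BlockDiag Fq K M) := by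
  rw [wtSR, hammingNorm_eq_sum_curry]
  gcongr with i
  rw [curry_vecMul_blockDiag, ← span_range_vecMul_map_eq _ (hM i)]
  exact finrank_span_range_le_hammingNorm _

end BlockDiag

/-- `ψ` is injective by `wtSR_pos`, so `dSR C ≤ minHD (C.map ψ)`, and the Singleton bound for
`C.map ψ` meets the cardinality of the MSRD code `C`. -/
theorem card_map_eq_pow_sub_minHD {F K ι : Type} [Field F] [Field K] [Fintype K]
    [DecidableEq K] [Algebra F K] [Fintype ι] {r : ℕ} (C : Submodule K (ι × Fin r → K))
    (hMSRD : Nat.card C = Fintype.card K ^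
      (Fintype.card ι * r - dSR F (C : Set (ι × Fin r → K)) + 1))
    (ψ : (ι × Fin r → K) →ₗ[K] (ι × Fin r → K)) (hψ : ∀ x, wtSR F x ≤ hammingNorm (ψ x)) :
    Nat.card (C.map ψ) = Fintype.card K ^
      (Fintype.card ι * r - minHD (C.map ψ : Set (ι × Fin r → K)) + 1) := by
  have hK := Fintype.one_lt_card (α := K)
  have hinj : Injective ψ := by
    refine (injective_iff_map_eq_zero ψ).2 fun x hx => ?_
    by_contra h
    have := (wtSR_pos h).trans_le (hψ x)
    rw [hx, hammingNorm_zero] at this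
    exact lt_irrefl 0 this
  have hcard : Nat.card (C.map ψ) = Nat.card C :=
    (Nat.card_congr (Submodule.equivMapOfInjective ψ hinj C).toEquiv).symm
  obtain ⟨u, hu, hu0⟩ : ∃ u ∈ C, u ≠ 0 := by
    refine (Submodule.ne_bot_iff C).1 fun hbot => ?_
    rw [hbot, Nat.card_unique] at hMSRD
    exact (Nat.one_lt_pow (Nat.succ_ne_zero _) hK).ne hMSRD
  have hpair : ∃ c ∈ (C.map ψ : Set (ι × Fin r → K)), ∃ d ∈ (C.map ψ : Set (ι × Fin r → K)),
      c ≠ d :=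
    ⟨ψ u, mem_map_of_mem hu, 0, zero_mem _, (map_ne_zero_iff ψ hinj).2 hu0⟩
  have hle : dSR F (C : Set (ι × Fin r → K)) ≤ minHD (C.map ψ : Set (ι × Fin r → K)) := by
    refine le_minHD hpair ?_
    rintro _ ⟨u, hu, rfl⟩ _ ⟨v, hv, rfl⟩ huv
    calc dSR F (C : Set (ι × Fin r → K))
        ≤ wtSR F (v - u) := Nat.sInf_le ⟨v, hv, u, hu, fun h => huv (h ▸ rfl), rfl⟩
      _ ≤ hammingNorm (ψ (v - u)) := hψ _
      _ = hdist (ψ u) (ψ v) := by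
        rw [hdist_eq_hammingDist, hammingDist_eq_hammingNorm, map_sub, neg_add_eq_sub]
  have hge : minHD (C.map ψ : Set (ι × Fin r → K)) ≤ dSR F (C : Set (ι × Fin r → K)) := by
    have hsingleton : Nat.card (C.map ψ) ≤ _ := card_le_pow_minHD hpair
    have hlen := minHD_le_card (C.map ψ : Set (ι × Fin r → K))
    rw [hcard, hMSRD, Fintype.card_prod, Fintype.card_fin] at hsingleton
    rw [Fintype.card_prod, Fintype.card_fin] at hlen
    have := (Nat.pow_le_pow_iff_right hK).1 hsingleton
    omega
  rw [hcard, hMSRD, le_antisymm hge hle]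

theorem construction1_is_PMDS_general
    (q m r g δ k : ℕ) (hδ : 0 < δ)
    (ν : ℕ) (hν : ν = r + δ - 1)
    (Fq K : Type) [Field Fq] [Field K] [Fintype Fq] [Fintype K] [Algebra Fq K]
    (hcq : Fintype.card Fq = q) (hcK : Fintype.card K = q ^ m)
    (Cout : Submodule K (Fin g × Fin r → K))
    (hk : Module.finrank K ↥Cout = k)
    (hMSRD : Nat.card ↥Cout = (q ^ m) ^
      (g * r - dSR Fq ((Cout : Submodule K (Fin g × Fin r → K)) :
        Set (Fin g × Fin r → K)) + 1))
    (A : Fin g → Matrix (Fin r) (Fin ν) Fq)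
    (hAdim : ∀ i, Module.finrank Fq
      ↥(LinearMap.range (Matrix.vecMulLinear (A i))) = r)
    (hAMDS : ∀ i, Nat.card ↥(LinearMap.range (Matrix.vecMulLinear (A i)))
      = q ^ (ν - minHD ((LinearMap.range (Matrix.vecMulLinear (A i)) :
          Submodule Fq (Fin ν → Fq)) : Set (Fin ν → Fq)) + 1))
    (Cglob : Submodule K (Fin g × Fin ν → K))
    (hCglob : Cglob = Submodule.map
      (Matrix.vecMulLinear (BlockDiag Fq K A)) Cout) :
    Module.finrank K ↥Cglob = k ∧
    (∀ i : Fin g, ∀ c ∈ Cglob, ∀ d ∈ Cglob,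
      (fun j : Fin ν => c (i, j)) ≠ (fun j : Fin ν => d (i, j)) →
      δ ≤ hdist (fun j : Fin ν => c (i, j)) (fun j : Fin ν => d (i, j))) ∧
    (∀ Δ : (i : Fin g) → Fin r → Fin ν, (∀ i, Function.Injective (Δ i)) →
      Nat.card ↥(Submodule.map
          (LinearMap.funLeft K K (fun p : Fin g × Fin r => (p.1, Δ p.1 p.2))) Cglob)
        = (q ^ m) ^ (g * r - minHD ((Submodule.map
            (LinearMap.funLeft K K (fun p : Fin g × Fin r => (p.1, Δ p.1 p.2))) Cglob :
            Submodule K (Fin g × Fin r → K)) : Set (Fin g × Fin r → K)) + 1)) := by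
  classical
  subst hCglob hcq
  rw [← hcK] at hMSRD ⊢
  have hMDS : ∀ i (x : Fin r → Fq), x ≠ 0 → ν < r + hammingNorm (x ᵥ* A i) :=
    fun i _ => lt_add_hammingNorm_vecMul_of_isMDS (A i) (hAdim i) (hAMDS i)
  have hlocal : ∀ i (w : Fin r → K), w ≠ 0 →
      δ ≤ hammingNorm (w ᵥ* (A i).map (algebraMap Fq K)) :=
    fun i w hw => by have := lt_add_hammingNorm_vecMul_map (A i) (hMDS i) hw; omega
  refine ⟨?_, ?_, fun Δ hΔ => ?_⟩
  · have henc : Injective fun x : Fin g × Fin r → K => x ᵥ* BlockDiag Fq K A :=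
      vecMul_blockDiag_injective fun i w w' h => sub_eq_zero.1 <| by_contra fun hne =>
        hammingNorm_pos_iff.1 (hδ.trans_le (hlocal i _ hne))
          (by rw [sub_vecMul]; exact sub_eq_zero.2 h)
    rw [← hk]
    exact (Submodule.equivMapOfInjective _ henc Cout).finrank_eq.symm
  · rintro i _ ⟨u, -, rfl⟩ _ ⟨v, -, rfl⟩ hne
    change curry (u ᵥ* BlockDiag Fq K A) i ≠ curry (v ᵥ* BlockDiag Fq K A) i at hne
    change δ ≤ hdist (curry (u ᵥ* BlockDiag Fq K A) i) (curry (v ᵥ* BlockDiag Fq K A) i)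
    rw [curry_vecMul_blockDiag, curry_vecMul_blockDiag] at hne ⊢
    rw [hdist_eq_hammingDist, hammingDist_eq_hammingNorm, neg_add_eq_sub, ← sub_vecMul]
    exact hlocal i _ (sub_ne_zero.2 fun h => hne (h ▸ rfl))
  · have hunit : ∀ i, IsUnit ((A i).submatrix id (Δ i)) :=
      fun i => (forall_isUnit_submatrix_iff (A i)).2 (hMDS i) (Δ i) (hΔ i)
    rw [← Submodule.map_comp, funLeft_comp_vecMulLinear_blockDiag]
    have := card_map_eq_pow_sub_minHD Cout (by rwa [Fintype.card_fin])
      (vecMulLinear (BlockDiag Fq K fun i => (A i).submatrix id (Δ i)))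
      (wtSR_le_hammingNorm_vecMul_blockDiag hunit)
    rwa [Fintype.card_fin] at this

/-- (Construction 1.) Multiplying an MSRD outer code by a block diagonal
matrix of generator matrices of `F_q`-linear MDS local codes yields a PMDS code with
`(r,δ)`-localities: the dimension is preserved, every local projection has minimum
Hamming distance at least `δ`, and every restriction to `r` coordinates per local set
is MDS. -/
theorem construction1_is_PMDS
    (q m r g δ k : ℕ) (hq : IsPrimePow q) (hm : 0 < m) (hr : 0 < r)
    (hg : 0 < g) (hδ : 0 < δ)
    (ν : ℕ) (hν : ν = r + δ - 1)
    (Fq K : Type) [Field Fq] [Field K] [Fintype Fq] [Fintype K] [Algebra Fq K]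
    (hcq : Fintype.card Fq = q) (hcK : Fintype.card K = q ^ m)
    (Cout : Submodule K (Fin g × Fin r → K))
    (hk : Module.finrank K ↥Cout = k) (hk1 : 1 ≤ k) (hk2 : k ≤ g * r - 1)
    (hMSRD : Nat.card ↥Cout = (q ^ m) ^
      (g * r - dSR Fq ((Cout : Submodule K (Fin g × Fin r → K)) :
        Set (Fin g × Fin r → K)) + 1))
    (A : Fin g → Matrix (Fin r) (Fin ν) Fq)
    (hAdim : ∀ i, Module.finrank Fq
      ↥(LinearMap.range (Matrix.vecMulLinear (A i))) = r)
    (hAMDS : ∀ i, Nat.card ↥(LinearMap.range (Matrix.vecMulLinear (A i)))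
      = q ^ (ν - minHD ((LinearMap.range (Matrix.vecMulLinear (A i)) :
          Submodule Fq (Fin ν → Fq)) : Set (Fin ν → Fq)) + 1))
    (Cglob : Submodule K (Fin g × Fin ν → K))
    (hCglob : Cglob = Submodule.map
      (Matrix.vecMulLinear (BlockDiag Fq K A)) Cout) :
    Module.finrank K ↥Cglob = k ∧
    (∀ i : Fin g, ∀ c ∈ Cglob, ∀ d ∈ Cglob,
      (fun j : Fin ν => c (i, j)) ≠ (fun j : Fin ν => d (i, j)) →
      δ ≤ hdist (fun j : Fin ν => c (i, j)) (fun j : Fin ν => d (i, j))) ∧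
    (∀ Δ : (i : Fin g) → Fin r → Fin ν, (∀ i, Function.Injective (Δ i)) →
      Nat.card ↥(Submodule.map
          (LinearMap.funLeft K K (fun p : Fin g × Fin r => (p.1, Δ p.1 p.2))) Cglob)
        = (q ^ m) ^ (g * r - minHD ((Submodule.map
            (LinearMap.funLeft K K (fun p : Fin g × Fin r => (p.1, Δ p.1 p.2))) Cglob :
            Submodule K (Fin g × Fin r → K)) : Set (Fin g × Fin r → K)) + 1)) :=
  construction1_is_PMDS_general q m r g δ k hδ ν hν Fq K hcq hcK Cout hk hMSRD A hAdim hAMDS Cglob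
    hCglob
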